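/- arXiv:1704.00708 — 2 statements merged into one kernel-verified Lean document; each statement's English description precedes it below -/
import Mathlib

section
/- Let U and Y be d×r real matrices such that U^T Y = Y^T U is positive semidefinite. Then σ_min(U^T U)·‖U−Y‖_F² ≤ ‖(U−Y)U^T‖_F² ≤ (1/(2(√2−1)))·‖UU^T − YY^T‖_F². -/
/-!
Write `G = UᵀU`, `H = UᵀY`, `K = YᵀY` and `Δ = U - Y`. Since `H` is symmetric, `ΔᵀΔ = G - 2H + K`,
`‖ΔUᵀ‖² = tr(G ΔᵀΔ)` and `‖UUᵀ - YYᵀ‖² = tr G² - 2 tr H² + tr K²`. For `s = √2 - 1`, the root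
of `s² + 2s = 1`, this gives
`‖UUᵀ - YYᵀ‖² - 2s ‖ΔUᵀ‖² = ‖s(G - H) - (K - H)‖² + (2 - 2s) tr(H ΔᵀΔ)`,
and the last trace is nonnegative as the trace of a product of two PSD matrices.
The lower bound holds row by row: `‖U x‖² ≥ σ ‖x‖²` for each row `x` of `Δ`.
-/

open Matrix BigOperators

noncomputable section

/-- Squared Frobenius norm of a real matrix. -/
def frobSq {m n : Type*} [Fintype m] [Fintype n] (A : Matrix m n ℝ) : ℝ :=
  ∑ i, ∑ j, (A i j) ^ 2

section

variable {l m n : Type*} [Fintype l] [Fintype m] [Fintype n]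

lemma frobSq_eq_trace (A : Matrix m n ℝ) : frobSq A = (Aᵀ * A).trace := by
  simp only [frobSq, trace, diag, mul_apply, transpose_apply, sq]
  rw [Finset.sum_comm]

lemma frobSq_mul_transpose (W V : Matrix m n ℝ) :
    frobSq (W * Vᵀ) = (Vᵀ * V * (Wᵀ * W)).trace := by
  rw [frobSq_eq_trace, transpose_mul, transpose_transpose, ← Matrix.mul_assoc, trace_mul_comm]
  simp only [Matrix.mul_assoc]

open scoped MatrixOrder in
lemma Matrix.PosSemidef.trace_mul_nonneg {A B : Matrix n n ℝ} (hA : A.PosSemidef)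
    (hB : B.PosSemidef) : 0 ≤ (A * B).trace := by
  classical
  obtain ⟨C, rfl⟩ := CStarAlgebra.nonneg_iff_eq_star_mul_self.mp hB.nonneg
  rw [star_eq_conjTranspose, ← Matrix.mul_assoc, trace_mul_comm, ← Matrix.mul_assoc]
  exact (hA.mul_mul_conjTranspose_same C).trace_nonneg

lemma Matrix.IsSymm.trace_mul_self_nonneg {A : Matrix n n ℝ} (hA : A.IsSymm) :
    0 ≤ (A * A).trace := by
  have := (posSemidef_conjTranspose_mul_self A).trace_nonneg
  simpa [conjTranspose_eq_transpose_of_trivial, hA.eq] using this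

lemma le_frobSq_mul_transpose {U : Matrix n m ℝ} {σ : ℝ}
    (hσ : ∀ x : m → ℝ, σ * ∑ i, x i ^ 2 ≤ x ⬝ᵥ (Uᵀ * U) *ᵥ x) (W : Matrix l m ℝ) :
    σ * frobSq W ≤ frobSq (W * Uᵀ) := by
  have hrow : ∀ i, ∑ j, (W * Uᵀ) i j ^ 2 = W i ⬝ᵥ (Uᵀ * U) *ᵥ W i := by
    intro i
    rw [← mulVec_mulVec, dotProduct_mulVec, vecMul_transpose]
    simp [dotProduct, mul_apply, mulVec, sq, mul_comm]
  simp only [frobSq, hrow]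
  rw [Finset.mul_sum]
  exact Finset.sum_le_sum fun i _ => hσ (W i)

lemma two_mul_trace_mul_le {G H K : Matrix n n ℝ} (hG : G.IsSymm) (hH : H.PosSemidef)
    (hK : K.IsSymm) (hD : (G - 2 • H + K).PosSemidef) {s : ℝ}
    (hs : s ^ 2 + 2 * s = 1) :
    2 * s * (G * (G - 2 • H + K)).trace ≤ (G * G).trace - 2 * (H * H).trace + (K * K).trace := by
  have hH' : H.IsSymm := by
    simpa [IsSymm, IsHermitian, conjTranspose_eq_transpose_of_trivial] using hH.1
  set E := s • (G - H) - (K - H)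
  have hE : E.IsSymm := ((hG.sub hH').smul s).sub (hK.sub hH')
  have key : (G * G).trace - 2 * (H * H).trace + (K * K).trace
      - 2 * s * (G * (G - 2 • H + K)).trace
      = (E * E).trace + (2 - 2 * s) * (H * (G - 2 • H + K)).trace := by
    have hGH := trace_mul_comm H G
    have hGK := trace_mul_comm K G
    have hHK := trace_mul_comm K H
    simp only [E, sub_mul, mul_sub, mul_add, smul_mul, Matrix.mul_smul, trace_add,
      trace_sub, trace_smul, smul_eq_mul, smul_sub]
    linear_combination (s ^ 2 + s - 2) * hGH + s * hGK + (1 - s) * hHK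
      - ((G * G).trace - 2 * (G * H).trace + (H * H).trace) * hs
  have hs₁ : 0 ≤ 2 - 2 * s := by nlinarith
  linarith [hE.trace_mul_self_nonneg, mul_nonneg hs₁ (hH.trace_mul_nonneg hD)]

lemma frobSq_mul_transpose_sub_mul_transpose (U Y : Matrix m n ℝ) :
    frobSq (U * Uᵀ - Y * Yᵀ) =
      (Uᵀ * U * (Uᵀ * U)).trace - 2 * (Uᵀ * Y * (Yᵀ * U)).trace + (Yᵀ * Y * (Yᵀ * Y)).trace := by
  have cyc : ∀ A B C D : Matrix m n ℝ, (A * Bᵀ * (C * Dᵀ)).trace = (Bᵀ * C * (Dᵀ * A)).trace := by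
    intro A B C D
    rw [Matrix.mul_assoc, trace_mul_comm]
    simp only [Matrix.mul_assoc]
  rw [frobSq_eq_trace]
  simp only [transpose_sub, transpose_mul, transpose_transpose, Matrix.sub_mul, Matrix.mul_sub,
    trace_sub]
  linear_combination cyc U U U U - cyc U U Y Y - cyc Y Y U U
    - trace_mul_comm (Yᵀ * U) (Uᵀ * Y) + cyc Y Y Y Y

end

lemma transpose_mul_self_sub {m n : Type*} [Fintype m] {U Y : Matrix m n ℝ}
    (h : Yᵀ * U = Uᵀ * Y) :
    (U - Y)ᵀ * (U - Y) = Uᵀ * U - 2 • (Uᵀ * Y) + Yᵀ * Y := by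
  rw [transpose_sub, Matrix.sub_mul, Matrix.mul_sub, Matrix.mul_sub, h, two_smul]
  abel

theorem stmt1_general {d r : ℕ} (U Y : Matrix (Fin d) (Fin r) ℝ) (σmin : ℝ)
    (hσ : ∀ x : Fin r → ℝ, σmin * (∑ i, x i ^ 2) ≤ x ⬝ᵥ (Uᵀ * U).mulVec x)
    (hpsd : (Uᵀ * Y).PosSemidef) :
    σmin * frobSq (U - Y) ≤ frobSq ((U - Y) * Uᵀ) ∧
      frobSq ((U - Y) * Uᵀ) ≤
        (1 / (2 * (Real.sqrt 2 - 1))) * frobSq (U * Uᵀ - Y * Yᵀ) := by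
  refine ⟨le_frobSq_mul_transpose hσ _, ?_⟩
  have hsym : Yᵀ * U = Uᵀ * Y := by
    simpa only [conjTranspose_eq_transpose_of_trivial, transpose_mul, transpose_transpose]
      using hpsd.1.eq
  have hΔ : (Uᵀ * U - 2 • (Uᵀ * Y) + Yᵀ * Y).PosSemidef := by
    rw [← transpose_mul_self_sub hsym, ← conjTranspose_eq_transpose_of_trivial]
    exact posSemidef_conjTranspose_mul_self _
  have h2 : (Real.sqrt 2) ^ 2 = 2 := Real.sq_sqrt zero_le_two
  have hs_pos : 0 < 2 * (Real.sqrt 2 - 1) := by nlinarith [Real.sqrt_nonneg 2]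
  have hGram : ∀ A : Matrix (Fin d) (Fin r) ℝ, (Aᵀ * A).IsSymm := fun A => by
    rw [IsSymm, transpose_mul, transpose_transpose]
  rw [frobSq_mul_transpose, frobSq_mul_transpose_sub_mul_transpose, hsym,
    transpose_mul_self_sub hsym, one_div_mul_eq_div, le_div_iff₀' hs_pos]
  exact two_mul_trace_mul_le (hGram U) hpsd (hGram Y) hΔ (by linear_combination h2)

/-- If `UᵀY = YᵀU` is PSD, and `σmin` is a lower bound on the eigenvalues of `UᵀU`
(in particular one may take `σmin = σ_min(UᵀU)`), then
`σmin‖U−Y‖_F² ≤ ‖(U−Y)Uᵀ‖_F² ≤ (1/(2(√2−1)))‖UUᵀ − YYᵀ‖_F²`. -/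
theorem stmt1 {d r : ℕ} (U Y : Matrix (Fin d) (Fin r) ℝ) (σmin : ℝ)
    (hσ : ∀ x : Fin r → ℝ, σmin * (∑ i, x i ^ 2) ≤ x ⬝ᵥ (Uᵀ * U).mulVec x)
    (hsym : Uᵀ * Y = Yᵀ * U) (hpsd : (Uᵀ * Y).PosSemidef) :
    σmin * frobSq (U - Y) ≤ frobSq ((U - Y) * Uᵀ) ∧
      frobSq ((U - Y) * Uᵀ) ≤
        (1 / (2 * (Real.sqrt 2 - 1))) * frobSq (U * Uᵀ - Y * Yᵀ) :=
  stmt1_general U Y σmin hσ hpsd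
end
end

section
/- Let U, U* ∈ ℝ^{d×r} and let R minimize ‖U − U*Z‖_F over orthogonal r×r matrices Z; set Δ = U − U*R, M = UU^T, M* = U*(U*)^T. Then ‖UΔ^T + ΔU^T‖_F ≤ (1 + √2)·‖M − M*‖_F. -/
open Matrix BigOperators

noncomputable section

/-!
Put `Q = U*R`, so that `M* = QQᵀ`, `Δ = U − Q` and `UΔᵀ + ΔUᵀ = (M − M*) + ΔΔᵀ`; by the
triangle inequality it suffices to show `‖ΔΔᵀ‖_F² ≤ 2‖M − M*‖_F²`.

Expanding `‖U − QW‖_F²`, optimality of `R` says `tr(KW) ≤ tr K` for `K = UᵀQ` and every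
orthogonal `W`. Testing this against the rotations `exp(tS)`, `S` skew, shows that `K` is
symmetric, and testing it against Householder reflections shows that `K` is positive
semidefinite. With `P = UᵀU`, `G = QᵀQ` and `ΔᵀΔ = P + G − 2K`, the bound is the trace of the
identity `2(P² + G² − 2K²) − (ΔᵀΔ)² = (P − G)² + 2(KΔᵀΔ + ΔᵀΔK)`, whose right side has
nonnegative trace because `K` is positive semidefinite.
-/

section Frobenius

variable {m n : Type*} [Fintype m] [Fintype n]

theorem frobSq_eq_trace_transpose_mul (A : Matrix m n ℝ) : frobSq A = trace (Aᵀ * A) := by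
  simp only [frobSq, trace, diag, mul_apply, transpose_apply, sq]
  exact Finset.sum_comm

theorem frobSq_eq_trace_mul_self {A : Matrix n n ℝ} (hA : A.IsSymm) :
    frobSq A = trace (A * A) := by
  rw [frobSq_eq_trace_transpose_mul, hA.eq]

open scoped Matrix.Norms.Frobenius in
theorem sqrt_frobSq_add_le (A B : Matrix m n ℝ) :
    √(frobSq (A + B)) ≤ √(frobSq A) + √(frobSq B) := by
  have hnorm (X : Matrix m n ℝ) : √(frobSq X) = ‖X‖ := by
    simp [frobSq, frobenius_norm_def, Real.sqrt_eq_rpow]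
  simpa only [hnorm] using norm_add_le A B

theorem frobSq_sub_mul_of_mem_orthogonalGroup [DecidableEq n] (U Q : Matrix m n ℝ)
    {W : Matrix n n ℝ} (hW : W ∈ orthogonalGroup n ℝ) :
    frobSq (U - Q * W) = frobSq U + frobSq Q - 2 * trace (Uᵀ * Q * W) := by
  have hWWt : W * Wᵀ = 1 := (mem_orthogonalGroup_iff n ℝ).mp hW
  have hcross : trace ((Q * W)ᵀ * U) = trace (Uᵀ * (Q * W)) := by
    rw [← trace_transpose, transpose_mul, transpose_transpose]
  have hsq : trace ((Q * W)ᵀ * (Q * W)) = trace (Qᵀ * Q) := by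
    rw [transpose_mul, Matrix.mul_assoc, trace_mul_comm, Matrix.mul_assoc, Matrix.mul_assoc,
      hWWt, Matrix.mul_one]
  simp only [frobSq_eq_trace_transpose_mul, transpose_sub, Matrix.sub_mul, Matrix.mul_sub,
    trace_sub, hcross, hsq, Matrix.mul_assoc]
  ring

end Frobenius

namespace Matrix

variable {m n : Type*} [Fintype m] [Fintype n] [DecidableEq n]

theorem exp_mem_orthogonalGroup {S : Matrix n n ℝ} (hS : Sᵀ = -S) :
    NormedSpace.exp S ∈ orthogonalGroup n ℝ := by
  rw [mem_orthogonalGroup_iff', ← exp_transpose, hS,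
    ← exp_add_of_commute _ _ (Commute.refl S).neg_left, neg_add_cancel, NormedSpace.exp_zero]

open scoped Norms.Operator in
theorem trace_mul_eq_zero_of_forall_trace_mul_le {K S : Matrix n n ℝ}
    (hK : ∀ W ∈ orthogonalGroup n ℝ, trace (K * W) ≤ trace K) (hS : Sᵀ = -S) :
    trace (K * S) = 0 := by
  have hderiv : HasDerivAt (fun t : ℝ ↦ trace (K * NormedSpace.exp (t • S)))
      (trace (K * (NormedSpace.exp ((0 : ℝ) • S) * S))) 0 :=
    ((traceLinearMap n ℝ ℝ).toContinuousLinearMap.comp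
      (ContinuousLinearMap.mul ℝ _ K)).hasFDerivAt.comp_hasDerivAt 0
      (hasDerivAt_exp_smul_const S 0)
  have hmax : IsLocalMax (fun t : ℝ ↦ trace (K * NormedSpace.exp (t • S))) 0 :=
    Filter.Eventually.of_forall fun t ↦ by
      simpa using hK _ (exp_mem_orthogonalGroup (S := t • S) (by simp [hS]))
  simpa using hmax.hasDerivAt_eq_zero hderiv

theorem isSymm_of_forall_trace_mul_le {K : Matrix n n ℝ}
    (hK : ∀ W ∈ orthogonalGroup n ℝ, trace (K * W) ≤ trace K) : K.IsSymm := by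
  ext i j
  have h := trace_mul_eq_zero_of_forall_trace_mul_le hK
    (S := single i j 1 - single j i 1) (by simp)
  simp only [Matrix.mul_sub, trace_sub, trace_mul_single] at h
  simpa [sub_eq_zero] using h

theorem one_sub_smul_vecMulVec_mem_orthogonalGroup {v : n → ℝ} (hv : v ⬝ᵥ v ≠ 0) :
    1 - (2 / (v ⬝ᵥ v)) • vecMulVec v v ∈ orthogonalGroup n ℝ := by
  rw [mem_orthogonalGroup_iff']
  simp only [transpose_sub, transpose_one, transpose_smul, transpose_vecMulVec, Matrix.sub_mul,
    Matrix.mul_sub, Matrix.one_mul, Matrix.mul_one, Matrix.smul_mul, Matrix.mul_smul,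
    vecMulVec_mul_vecMulVec, vecMulVec_smul]
  rw [smul_smul, div_mul_cancel₀ 2 hv]
  module

theorem posSemidef_of_forall_trace_mul_le {K : Matrix n n ℝ}
    (hK : ∀ W ∈ orthogonalGroup n ℝ, trace (K * W) ≤ trace K) : K.PosSemidef := by
  refine posSemidef_iff_dotProduct_mulVec.mpr ⟨?_, fun v ↦ ?_⟩
  · rw [IsHermitian, conjTranspose_eq_transpose_of_trivial]
    exact isSymm_of_forall_trace_mul_le hK
  rcases eq_or_ne (v ⬝ᵥ v) 0 with hv | hv
  · simp [dotProduct_self_eq_zero.mp hv]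
  have hpos : 0 < v ⬝ᵥ v := lt_of_le_of_ne (dotProduct_self_star_nonneg v) hv.symm
  have hrefl := hK _ (one_sub_smul_vecMulVec_mem_orthogonalGroup hv)
  rw [Matrix.mul_sub, Matrix.mul_one, Matrix.mul_smul, trace_sub, trace_smul, mul_vecMulVec,
    trace_vecMulVec] at hrefl
  have hquad : 0 ≤ (2 / (v ⬝ᵥ v)) * (K *ᵥ v ⬝ᵥ v) := by simpa using hrefl
  simpa [dotProduct_comm] using nonneg_of_mul_nonneg_right hquad (by positivity)

theorem posSemidef_transpose_mul_mul_of_forall_frobSq_le (U V : Matrix m n ℝ) {R : Matrix n n ℝ}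
    (hR : R ∈ orthogonalGroup n ℝ)
    (hmin : ∀ Z ∈ orthogonalGroup n ℝ, frobSq (U - V * R) ≤ frobSq (U - V * Z)) :
    (Uᵀ * (V * R)).PosSemidef := by
  refine posSemidef_of_forall_trace_mul_le fun W hW ↦ ?_
  have h := hmin (R * W) (mul_mem hR hW)
  have h1 := frobSq_sub_mul_of_mem_orthogonalGroup U (V * R) (one_mem _)
  rw [← Matrix.mul_assoc, frobSq_sub_mul_of_mem_orthogonalGroup U (V * R) hW] at h
  rw [Matrix.mul_one, Matrix.mul_one] at h1
  linarith

end Matrix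

section Alignment

variable {m n : Type*} [Fintype m] [Fintype n]

theorem trace_mul_transpose_mul_mul_transpose {R : Type*} [NonUnitalCommSemiring R]
    (X Y Z W : Matrix m n R) :
    trace (X * Yᵀ * (Z * Wᵀ)) = trace (Yᵀ * Z * (Wᵀ * X)) := by
  rw [Matrix.mul_assoc, trace_mul_comm]
  simp only [Matrix.mul_assoc]

theorem trace_mul_self_le_of_trace_nonneg {P G A : Matrix n n ℝ}
    (hPG : 0 ≤ trace ((P - G) * (P - G))) (hA : 0 ≤ trace (A * (P + G - 2 • A))) :
    trace ((P + G - 2 • A) * (P + G - 2 • A)) ≤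
      2 * (trace (P * P) + trace (G * G) - 2 * trace (A * A)) := by
  have key : 2 • (P * P + G * G - 2 • (A * A)) - (P + G - 2 • A) * (P + G - 2 • A) =
      (P - G) * (P - G) + 2 • (A * (P + G - 2 • A) + (P + G - 2 • A) * A) := by
    noncomm_ring
  have htrace := congrArg trace key
  simp only [trace_sub, trace_add, trace_smul, nsmul_eq_mul, Nat.cast_ofNat,
    trace_mul_comm (P + G - 2 • A) A] at htrace
  linarith

theorem frobSq_sub_mul_transpose_le {U Q : Matrix m n ℝ} (hA : (Uᵀ * Q).PosSemidef) :
    frobSq ((U - Q) * (U - Q)ᵀ) ≤ 2 * frobSq (U * Uᵀ - Q * Qᵀ) := by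
  have hQU : Qᵀ * U = Uᵀ * Q := by
    simpa only [conjTranspose_eq_transpose_of_trivial, transpose_mul, transpose_transpose] using
      hA.isHermitian.eq
  have hS : (U - Q)ᵀ * (U - Q) = Uᵀ * U + Qᵀ * Q - 2 • (Uᵀ * Q) := by
    simp only [transpose_sub, Matrix.sub_mul, Matrix.mul_sub, hQU]
    abel
  have hΔ : frobSq ((U - Q) * (U - Q)ᵀ) =
      trace ((U - Q)ᵀ * (U - Q) * ((U - Q)ᵀ * (U - Q))) := by
    rw [frobSq_eq_trace_transpose_mul, transpose_mul, transpose_transpose,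
      trace_mul_transpose_mul_mul_transpose]
  have hM : frobSq (U * Uᵀ - Q * Qᵀ) = trace (Uᵀ * U * (Uᵀ * U)) + trace (Qᵀ * Q * (Qᵀ * Q)) -
      2 * trace (Uᵀ * Q * (Uᵀ * Q)) := by
    rw [frobSq_eq_trace_transpose_mul]
    simp only [transpose_sub, transpose_mul, transpose_transpose, Matrix.sub_mul,
      Matrix.mul_sub, trace_sub, trace_mul_transpose_mul_mul_transpose, hQU]
    ring
  have hPG : 0 ≤ trace ((Uᵀ * U - Qᵀ * Q) * (Uᵀ * U - Qᵀ * Q)) := by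
    rw [← frobSq_eq_trace_mul_self]
    · exact Finset.sum_nonneg fun _ _ ↦ Finset.sum_nonneg fun _ _ ↦ sq_nonneg _
    · simp [IsSymm, transpose_sub]
  have hAS : 0 ≤ trace (Uᵀ * Q * ((U - Q)ᵀ * (U - Q))) := by
    rw [trace_mul_cycle', ← Matrix.mul_assoc]
    simpa only [conjTranspose_eq_transpose_of_trivial] using
      (hA.mul_mul_conjTranspose_same (U - Q)).trace_nonneg
  rw [hS] at hΔ hAS
  rw [hΔ, hM]
  exact trace_mul_self_le_of_trace_nonneg hPG hAS

end Alignment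

/-- With `R` the optimal orthogonal alignment, `Δ = U − U*R`, `M = UUᵀ`, `M* = U*(U*)ᵀ`:
`‖UΔᵀ + ΔUᵀ‖_F ≤ (1 + √2)‖M − M*‖_F`. -/
theorem stmt17 {d r : ℕ} (U Ustar : Matrix (Fin d) (Fin r) ℝ)
    (R : Matrix (Fin r) (Fin r) ℝ) (hR : R ∈ Matrix.orthogonalGroup (Fin r) ℝ)
    (hmin : ∀ Z ∈ Matrix.orthogonalGroup (Fin r) ℝ,
      frobSq (U - Ustar * R) ≤ frobSq (U - Ustar * Z)) :
    Real.sqrt (frobSq (U * (U - Ustar * R)ᵀ + (U - Ustar * R) * Uᵀ)) ≤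
      (1 + Real.sqrt 2) * Real.sqrt (frobSq (U * Uᵀ - Ustar * Ustarᵀ)) := by
  set Δ := U - Ustar * R
  have hMstar : Ustar * Ustarᵀ = Ustar * R * (Ustar * R)ᵀ := by
    rw [transpose_mul, Matrix.mul_assoc, ← Matrix.mul_assoc R,
      (mem_orthogonalGroup_iff _ _).mp hR, Matrix.one_mul]
  have hsplit : U * Δᵀ + Δ * Uᵀ = (U * Uᵀ - Ustar * Ustarᵀ) + Δ * Δᵀ := by
    simp only [hMstar, Δ, transpose_sub, Matrix.sub_mul, Matrix.mul_sub]
    abel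
  have halign : √(frobSq (Δ * Δᵀ)) ≤ √2 * √(frobSq (U * Uᵀ - Ustar * Ustarᵀ)) := by
    rw [← Real.sqrt_mul zero_le_two, hMstar]
    exact Real.sqrt_le_sqrt <| frobSq_sub_mul_transpose_le <|
      posSemidef_transpose_mul_mul_of_forall_frobSq_le U Ustar hR hmin
  calc √(frobSq (U * Δᵀ + Δ * Uᵀ))
      ≤ √(frobSq (U * Uᵀ - Ustar * Ustarᵀ)) + √(frobSq (Δ * Δᵀ)) := by
        rw [hsplit]; exact sqrt_frobSq_add_le _ _
    _ ≤ (1 + √2) * √(frobSq (U * Uᵀ - Ustar * Ustarᵀ)) := by linarith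
end
end
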